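/- Fix δ > 0 and e > 0, and set f(ν) = 1 + e·cos ν, g(ν) = 4 + 3δ + e·cos ν, Δ = √(4e⁴ + 4e²(δ+1)(δ+4) + (δ+1)(3δ+4)²(9δ+1)), b₁₂(ν) = 4e²cos(2ν) + 2e² + 8e(δ+2)cos ν − 9δ(δ+1) + 4, and b₂₁(ν) = 2e² + 8e(2δ+3)cos ν + (3δ+4)(3δ+7). Define the 2×2 matrices B±(ν) with entries (B±)₁₁ = −e(2δ+3) sin ν/(f g), (B±)₁₂ = (b₁₂ ± Δ)/(4 f g), (B±)₂₁ = −(b₂₁ ± Δ)/(4 f g), (B±)₂₂ = −e(δ + 2f) sin ν/(f g), the 4×4 matrices B(ν) = [[0, I₂],[G/f, −2J₂]] with G = diag(3+2δ, −δ) and J₂ = [[0,−1],[1,0]], and T(ν) = [[I₂, I₂],[B₊(ν), B₋(ν)]]. Then det T(ν) = Δ²/(4 f(ν)² g(ν)²) (in particular T(ν) is invertible wherever f g ≠ 0), and B(ν) T(ν) − T'(ν) = T(ν) · diag(B₊(ν), B₋(ν)); i.e. the gauge transformation z = T(ν)u block-diagonalizes the system z' = B(ν)z into two 2×2 systems u'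 = B±(ν)u. -/

import Mathlib

set_option maxHeartbeats 1000000


open Matrix

noncomputable section

/-- `f(ν) = 1 + e cos ν`. -/
def fE (e ν : ℝ) : ℝ := 1 + e * Real.cos ν

/-- `g(ν) = 4 + 3δ + e cos ν`. -/
def gE (δ e ν : ℝ) : ℝ := 4 + 3 * δ + e * Real.cos ν

/-- `Δ = √(4e⁴ + 4e²(δ+1)(δ+4) + (δ+1)(3δ+4)²(9δ+1))`. -/
def ΔE (δ e : ℝ) : ℝ :=
  Real.sqrt (4 * e ^ 4 + 4 * e ^ 2 * (δ + 1) * (δ + 4)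
    + (δ + 1) * (3 * δ + 4) ^ 2 * (9 * δ + 1))

/-- `b₁₂(ν)`. -/
def b12E (δ e ν : ℝ) : ℝ :=
  4 * e ^ 2 * Real.cos (2 * ν) + 2 * e ^ 2 + 8 * e * (δ + 2) * Real.cos ν
    - 9 * δ * (δ + 1) + 4

/-- `b₂₁(ν)`. -/
def b21E (δ e ν : ℝ) : ℝ :=
  2 * e ^ 2 + 8 * e * (2 * δ + 3) * Real.cos ν + (3 * δ + 4) * (3 * δ + 7)

/-- The matrices `B±(ν)`; `sgn = 1` gives `B₊`, `sgn = −1` gives `B₋`. -/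
def BpmE (sgn δ e ν : ℝ) : Matrix (Fin 2) (Fin 2) ℝ :=
  !![-(e * (2 * δ + 3) * Real.sin ν) / (fE e ν * gE δ e ν),
      (b12E δ e ν + sgn * ΔE δ e) / (4 * fE e ν * gE δ e ν);
    -(b21E δ e ν + sgn * ΔE δ e) / (4 * fE e ν * gE δ e ν),
      -(e * (δ + 2 * fE e ν) * Real.sin ν) / (fE e ν * gE δ e ν)]

/-- The `4×4` matrix `B(ν) = [[0, I₂],[G/f, −2J₂]]`, `G = diag(3+2δ, −δ)`. -/
def BbigE (δ e ν : ℝ) : Matrix (Fin 2 ⊕ Fin 2) (Fin 2 ⊕ Fin 2) ℝ :=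
  Matrix.fromBlocks 0 1
    ((fE e ν)⁻¹ • Matrix.diagonal ![3 + 2 * δ, -δ])
    ((-2 : ℝ) • !![0, -1; 1, 0])

/-- The gauge matrix `T(ν) = [[I₂, I₂],[B₊(ν), B₋(ν)]]`. -/
def TmatE (δ e ν : ℝ) : Matrix (Fin 2 ⊕ Fin 2) (Fin 2 ⊕ Fin 2) ℝ :=
  Matrix.fromBlocks 1 1 (BpmE 1 δ e ν) (BpmE (-1) δ e ν)

/-- Entrywise derivative `T'(ν)`. -/
def TmatE' (δ e ν : ℝ) : Matrix (Fin 2 ⊕ Fin 2) (Fin 2 ⊕ Fin 2) ℝ :=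
  fun i j => deriv (fun θ => TmatE δ e θ i j) ν

/-- Entrywise derivative of `BpmE`. -/
def BpmE' (sgn δ e ν : ℝ) : Matrix (Fin 2) (Fin 2) ℝ :=
  Matrix.of fun i j => deriv (fun θ => BpmE sgn δ e θ i j) ν

lemma key (δ e : ℝ) (s : ℝ) (hΔ2 : ΔE δ e ^ 2 = 4 * e ^ 4 + 4 * e ^ 2 * (δ + 1) * (δ + 4)
      + (δ + 1) * (3 * δ + 4) ^ 2 * (9 * δ + 1))
    (hs : s = 1 ∨ s = -1) (ν : ℝ) (hf : fE e ν ≠ 0) (hg : gE δ e ν ≠ 0) :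
    (fE e ν)⁻¹ • Matrix.diagonal ![3 + 2 * δ, -δ] + ((-2 : ℝ) • !![0, -1; 1, 0]) * BpmE s δ e ν
      - BpmE' s δ e ν = BpmE s δ e ν * BpmE s δ e ν := by
  have hne : fE e ν * gE δ e ν ≠ 0 := mul_ne_zero hf hg
  have hne4 : 4 * fE e ν * gE δ e ν ≠ 0 := mul_ne_zero (mul_ne_zero four_ne_zero hf) hg
  have hsin := Real.hasDerivAt_sin ν
  have hcos := Real.hasDerivAt_cos ν
  have hF : HasDerivAt (fun θ => fE e θ) (e * -Real.sin ν) ν := by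
    simp only [fE]; exact (hcos.const_mul e).const_add 1
  have hG : HasDerivAt (fun θ => gE δ e θ) (e * -Real.sin ν) ν := by
    simp only [gE]; exact (hcos.const_mul e).const_add (4 + 3 * δ)
  have hFG := hF.mul hG
  have h4FG := (hF.const_mul (4:ℝ)).mul hG
  have hcos2 : HasDerivAt (fun θ => Real.cos (2 * θ)) (-Real.sin (2 * ν) * 2) ν := by
    simpa [Function.comp_def] using (Real.hasDerivAt_cos (2 * ν)).comp ν ((hasDerivAt_id ν).const_mul 2)
  have hb12 : HasDerivAt (fun θ => b12E δ e θ)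
      (4 * e ^ 2 * (-Real.sin (2 * ν) * 2) + 8 * e * (δ + 2) * -Real.sin ν) ν := by
    simp only [b12E]
    exact ((((hcos2.const_mul (4 * e ^ 2)).add_const (2 * e ^ 2)).add
      (hcos.const_mul (8 * e * (δ + 2)))).sub_const (9 * δ * (δ + 1))).add_const 4
  have hb21 : HasDerivAt (fun θ => b21E δ e θ) (8 * e * (2 * δ + 3) * -Real.sin ν) ν := by
    simp only [b21E]
    exact ((hcos.const_mul (8 * e * (2 * δ + 3))).const_add (2 * e ^ 2)).add_const
      ((3 * δ + 4) * (3 * δ + 7))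
  have h00 := ((hsin.const_mul (e * (2 * δ + 3))).neg.div hFG hne).deriv
  have h01 := ((hb12.add_const (s * ΔE δ e)).div h4FG hne4).deriv
  have h10 := ((hb21.add_const (s * ΔE δ e)).neg.div h4FG hne4).deriv
  have h11 := ((((hF.const_mul (2:ℝ)).const_add δ).const_mul e).mul hsin).neg.div hFG hne |>.deriv
  simp only [Pi.neg_def, Pi.mul_def, Pi.div_def] at h00 h01 h10 h11
  have hsc : Real.sin ν ^ 2 = 1 - Real.cos ν ^ 2 := by
    have := Real.sin_sq_add_cos_sq ν; linarith
  have hf' : (1:ℝ) + e * Real.cos ν ≠ 0 := hf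
  have hg' : (4:ℝ) + 3 * δ + e * Real.cos ν ≠ 0 := hg
  have hg'' : (4:ℝ) + δ * 3 + e * Real.cos ν ≠ 0 := fun h => hg' (by linarith)
  clear hsin hcos hF hG hFG h4FG hcos2 hb12 hb21 hne hne4
  ext i j
  fin_cases i <;> fin_cases j <;>
    simp only [BpmE, BpmE', Matrix.add_apply, Matrix.sub_apply, Matrix.smul_apply,
      Matrix.mul_apply, Fin.sum_univ_two, Matrix.of_apply, Matrix.cons_val', Matrix.cons_val_zero,
      Matrix.cons_val_one, Matrix.head_cons, Matrix.head_fin_const, Matrix.empty_val',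
      Matrix.cons_val_fin_one, Matrix.diagonal_apply_eq, Matrix.diagonal_apply_ne,
      Fin.zero_eta, Fin.mk_one, ne_eq, zero_ne_one, one_ne_zero, not_false_eq_true,
      smul_eq_mul]
  · rw [h00]
    rcases hs with rfl | rfl <;>
    · simp only [fE, gE, b12E, b21E, Real.cos_two_mul, Real.sin_two_mul]
      field_simp
      linear_combination (16 * e ^ 2 * (2 * δ + 3) * (δ + 2 + 2 * e * Real.cos ν)) * hsc + hΔ2
  · rw [h01]
    rcases hs with rfl | rfl <;>
    · simp only [fE, gE, b12E, b21E, Real.cos_two_mul, Real.sin_two_mul]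
      field_simp
      ring
  · rw [h10]
    rcases hs with rfl | rfl <;>
    · simp only [fE, gE, b12E, b21E, Real.cos_two_mul, Real.sin_two_mul]
      field_simp
      ring
  · rw [h11]
    rcases hs with rfl | rfl <;>
    · simp only [fE, gE, b12E, b21E, Real.cos_two_mul, Real.sin_two_mul]
      field_simp
      linear_combination (-16 * e ^ 2 * (2 * (1 + e * Real.cos ν) * (4 + 3 * δ + e * Real.cos ν) - (δ + 2 * (1 + e * Real.cos ν)) * (2 * δ + 3))) * hsc + hΔ2

/-- For `δ, e > 0` and wherever `f g ≠ 0`: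
`det T(ν) = Δ²/(4f²g²)` (so `T(ν)` is invertible), and
`B(ν)T(ν) − T'(ν) = T(ν)·diag(B₊(ν), B₋(ν))`; i.e. the gauge transformation `z = T(ν)u`
block-diagonalizes `z' = B(ν)z` into the two systems `u' = B±(ν)u`. -/
theorem tschauner_gauge_transformation (δ e : ℝ) (hδ : 0 < δ) (he : 0 < e)
    (ν : ℝ) (hf : fE e ν ≠ 0) (hg : gE δ e ν ≠ 0) :
    (TmatE δ e ν).det = (ΔE δ e) ^ 2 / (4 * fE e ν ^ 2 * gE δ e ν ^ 2) ∧
    IsUnit (TmatE δ e ν) ∧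
    BbigE δ e ν * TmatE δ e ν - TmatE' δ e ν
      = TmatE δ e ν * Matrix.fromBlocks (BpmE 1 δ e ν) 0 0 (BpmE (-1) δ e ν) := by
  have hδ1 : (0:ℝ) < δ + 1 := by linarith
  have hrad : 0 < 4 * e ^ 4 + 4 * e ^ 2 * (δ + 1) * (δ + 4)
      + (δ + 1) * (3 * δ + 4) ^ 2 * (9 * δ + 1) := by
    have h1 : 0 < 4 * e ^ 4 := by positivity
    have h2 : 0 < 4 * e ^ 2 * (δ + 1) * (δ + 4) := by
      apply mul_pos; apply mul_pos; positivity; linarith; linarith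
    have h3 : 0 < (δ + 1) * (3 * δ + 4) ^ 2 * (9 * δ + 1) := by
      apply mul_pos; apply mul_pos; linarith; positivity; linarith
    linarith
  have hΔ2 : ΔE δ e ^ 2 = 4 * e ^ 4 + 4 * e ^ 2 * (δ + 1) * (δ + 4)
      + (δ + 1) * (3 * δ + 4) ^ 2 * (9 * δ + 1) := Real.sq_sqrt hrad.le
  have hΔpos : 0 < ΔE δ e := Real.sqrt_pos.mpr hrad
  have hdet : (TmatE δ e ν).det = (ΔE δ e) ^ 2 / (4 * fE e ν ^ 2 * gE δ e ν ^ 2) := by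
    rw [TmatE, Matrix.det_fromBlocks_one₁₁, Matrix.mul_one, Matrix.det_fin_two]
    simp only [BpmE, Matrix.sub_apply, Matrix.cons_val', Matrix.cons_val_zero,
      Matrix.cons_val_one, Matrix.head_cons, Matrix.head_fin_const, Matrix.empty_val',
      Matrix.cons_val_fin_one, Matrix.of_apply]
    field_simp
    ring
  refine ⟨hdet, ?_, ?_⟩
  · rw [Matrix.isUnit_iff_isUnit_det, isUnit_iff_ne_zero, hdet]
    exact div_ne_zero (pow_ne_zero _ hΔpos.ne') (by
      exact mul_ne_zero (mul_ne_zero four_ne_zero (pow_ne_zero _ hf)) (pow_ne_zero _ hg))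
  · have hT' : TmatE' δ e ν = Matrix.fromBlocks 0 0 (BpmE' 1 δ e ν) (BpmE' (-1) δ e ν) := by
      ext i j
      rcases i with i | i <;> rcases j with j | j <;>
        simp only [TmatE', TmatE, BpmE', Matrix.fromBlocks_apply₁₁, Matrix.fromBlocks_apply₁₂,
          Matrix.fromBlocks_apply₂₁, Matrix.fromBlocks_apply₂₂, Matrix.of_apply,
          Matrix.zero_apply, deriv_const']
    rw [BbigE, TmatE, hT', Matrix.fromBlocks_multiply, Matrix.fromBlocks_multiply,
      sub_eq_add_neg, Matrix.fromBlocks_neg, Matrix.fromBlocks_add, Matrix.fromBlocks_inj]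
    refine ⟨by simp, by simp, ?_, ?_⟩
    · simpa [Matrix.mul_one, Matrix.mul_zero, sub_eq_add_neg]
        using key δ e 1 hΔ2 (Or.inl rfl) ν hf hg
    · simpa [Matrix.mul_one, Matrix.mul_zero, sub_eq_add_neg]
        using key δ e (-1) hΔ2 (Or.inr rfl) ν hf hg

end
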